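/- arXiv:2508.02891 — 2 statements merged into one kernel-verified Lean document; each statement's English description precedes it below -/
import Mathlib

section
/- For all vectors z_1,…,z_8, w ∈ ℂ^4 the following polynomial identity holds: A·⟨127w⟩² − B·⟨127w⟩·⟨128w⟩ + C·⟨128w⟩² = ⟨1278⟩·det[(12w*34), z_6, z_5, (78*12w)], where ⟨127w⟩ := det[z_1 z_2 z_7 w], ⟨128w⟩ := det[z_1 z_2 z_8 w], and (12w*34) and (78*12w) are the shuffle vectors associated with the tuples ((z_1,z_2,w),(z_3,z_4)) and ((z_7,z_8),(z_1,z_2,w)) respectively. -/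
noncomputable section

/-- `⟨u₁ u₂ u₃ u₄⟩ = det[u₁ u₂ u₃ u₄]`: the determinant of the `4 × 4` complex matrix with
columns `u₁, u₂, u₃, u₄` in the listed order. -/
def det4 (a b c d : Fin 4 → ℂ) : ℂ :=
  Matrix.det (Matrix.of fun i j => ![a, b, c, d] j i)

/-- The chain polynomial `⟨X * Y * U⟩` for blocks `X = (x₁,x₂,x₃)`, `Y = (y₁,y₂)`,
`U = (u₁,u₂,u₃)` of sizes `(3,2,3)`:
`Σ_{w ∈ S₂¹} sign(w)·det[x₁ x₂ x₃ y_{w(2)}]·det[y_{w(1)} u₁ u₂ u₃]`. -/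
def chain323 (x1 x2 x3 y1 y2 u1 u2 u3 : Fin 4 → ℂ) : ℂ :=
  det4 x1 x2 x3 y2 * det4 y1 u1 u2 u3 - det4 x1 x2 x3 y1 * det4 y2 u1 u2 u3

/-- The shuffle vector `(X * Y) ∈ ℂ⁴` for tuples `X = (x₁,x₂,x₃)`, `Y = (y₁,y₂)`
(`p + q = 5`): `Σ_j (−1)^{j−1}·det[x₁ x₂ x₃ y₁ ⋯ ŷ_j ⋯ y₂]·y_j`. -/
def shuf32 (x1 x2 x3 y1 y2 : Fin 4 → ℂ) : Fin 4 → ℂ :=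
  det4 x1 x2 x3 y2 • y1 - det4 x1 x2 x3 y1 • y2

/-- The shuffle vector `(X * Y) ∈ ℂ⁴` for tuples `X = (x₁,x₂)`, `Y = (y₁,y₂,y₃)`
(`p + q = 5`): `Σ_j (−1)^{j−1}·det[x₁ x₂ y₁ ⋯ ŷ_j ⋯ y₃]·y_j`. -/
def shuf23 (x1 x2 y1 y2 y3 : Fin 4 → ℂ) : Fin 4 → ℂ :=
  det4 x1 x2 y2 y3 • y1 - det4 x1 x2 y1 y3 • y2 + det4 x1 x2 y1 y2 • y3

/-- `A := Y₈₈` where `Y_{ij} := ⟨12i * 43 * 56j⟩`. -/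
def Aco (z1 z2 z3 z4 z5 z6 z7 z8 : Fin 4 → ℂ) : ℂ :=
  chain323 z1 z2 z8 z4 z3 z5 z6 z8

/-- `B := Y₇₈ + Y₈₇` where `Y_{ij} := ⟨12i * 43 * 56j⟩`. -/
def Bco (z1 z2 z3 z4 z5 z6 z7 z8 : Fin 4 → ℂ) : ℂ :=
  chain323 z1 z2 z7 z4 z3 z5 z6 z8 + chain323 z1 z2 z8 z4 z3 z5 z6 z7

/-- `C := Y₇₇` where `Y_{ij} := ⟨12i * 43 * 56j⟩`. -/
def Cco (z1 z2 z3 z4 z5 z6 z7 z8 : Fin 4 → ℂ) : ℂ :=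
  chain323 z1 z2 z7 z4 z3 z5 z6 z7

/-!
Each `Y_{ij}` is bilinear in `(z_i, z_j)`, so the left side is `Y(v, v)` for
`v = ⟨127w⟩ z₈ − ⟨128w⟩ z₇`. By the three-term Plücker relation `⟨12vu⟩ = ⟨1278⟩⟨12wu⟩`, which
turns `Y(v, v)` into `⟨1278⟩·det[(12w*34), z₆, z₅, v]`; and `v = (78*12w)` is the linear relation
among the five vectors `z₇, z₈, z₁, z₂, w` of `ℂ⁴`.
-/

lemma det4_eq (a b c d : Fin 4 → ℂ) :
    det4 a b c d =
      a 0 * (b 1 * (c 2 * d 3 - c 3 * d 2) - b 2 * (c 1 * d 3 - c 3 * d 1)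
          + b 3 * (c 1 * d 2 - c 2 * d 1))
      - a 1 * (b 0 * (c 2 * d 3 - c 3 * d 2) - b 2 * (c 0 * d 3 - c 3 * d 0)
          + b 3 * (c 0 * d 2 - c 2 * d 0))
      + a 2 * (b 0 * (c 1 * d 3 - c 3 * d 1) - b 1 * (c 0 * d 3 - c 3 * d 0)
          + b 3 * (c 0 * d 1 - c 1 * d 0))
      - a 3 * (b 0 * (c 1 * d 2 - c 2 * d 1) - b 1 * (c 0 * d 2 - c 2 * d 0)
          + b 2 * (c 0 * d 1 - c 1 * d 0)) := by
  simp [det4, Matrix.det_succ_row_zero, Fin.sum_univ_succ, Fin.succAbove,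
    show (Fin.succ 2 : Fin 4) = 3 from rfl,
    show ((2 : Fin 3).castSucc : Fin 4) = 2 from rfl]
  ring

section Linearity

variable (p q : ℂ) (x y a b c d : Fin 4 → ℂ)

lemma det4_smul_sub_smul_left :
    det4 (p • x - q • y) b c d = p * det4 x b c d - q * det4 y b c d := by
  simp only [det4_eq, Pi.sub_apply, Pi.smul_apply, smul_eq_mul]; ring

lemma det4_smul_sub_smul_third :
    det4 a b (p • x - q • y) d = p * det4 a b x d - q * det4 a b y d := by
  simp only [det4_eq, Pi.sub_apply, Pi.smul_apply, smul_eq_mul]; ring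

lemma det4_smul_sub_smul_right :
    det4 a b c (p • x - q • y) = p * det4 a b c x - q * det4 a b c y := by
  simp only [det4_eq, Pi.sub_apply, Pi.smul_apply, smul_eq_mul]; ring

end Linearity

lemma det4_swap_middle (a b c d : Fin 4 → ℂ) : det4 a c b d = -det4 a b c d := by
  simp only [det4_eq]; ring

/-- The three-term Grassmann–Plücker relation, read as a statement about the third column. -/
lemma det4_third_smul_sub_smul_eq (a b c d v u : Fin 4 → ℂ) :
    det4 a b (det4 a b c v • d - det4 a b d v • c) u = det4 a b c d * det4 a b v u := by
  simp only [det4_eq, Pi.sub_apply, Pi.smul_apply, smul_eq_mul]; ring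

/-- Five vectors in `ℂ⁴` satisfy the linear relation `Σᵢ (-1)ⁱ ⟨x₀ ⋯ x̂ᵢ ⋯ x₄⟩ xᵢ = 0`. -/
lemma shuf23_eq (x1 x2 y1 y2 y3 : Fin 4 → ℂ) :
    shuf23 x1 x2 y1 y2 y3 = det4 y1 y2 x1 y3 • x2 - det4 y1 y2 x2 y3 • x1 := by
  ext i
  fin_cases i <;>
    simp only [shuf23, det4_eq, Fin.zero_eta, Fin.mk_one, Fin.reduceFinMk, Pi.add_apply,
      Pi.sub_apply, Pi.smul_apply, smul_eq_mul] <;> ring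

lemma chain323_smul_sub_smul (a b c d e f x y : Fin 4 → ℂ) (p q : ℂ) :
    chain323 a b (p • x - q • y) c d e f (p • x - q • y)
      = p ^ 2 * chain323 a b x c d e f x
        - p * q * (chain323 a b x c d e f y + chain323 a b y c d e f x)
        + q ^ 2 * chain323 a b y c d e f y := by
  simp only [chain323, det4_smul_sub_smul_third, det4_smul_sub_smul_right]; ring

/-- For all vectors `z₁, …, z₈, w ∈ ℂ⁴`:
`A·⟨127w⟩² − B·⟨127w⟩·⟨128w⟩ + C·⟨128w⟩² = ⟨1278⟩·det[(12w*34), z₆, z₅, (78*12w)]`. -/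
theorem identity_quadratic_in_127w_128w (z1 z2 z3 z4 z5 z6 z7 z8 w : Fin 4 → ℂ) :
    Aco z1 z2 z3 z4 z5 z6 z7 z8 * det4 z1 z2 z7 w ^ 2
      - Bco z1 z2 z3 z4 z5 z6 z7 z8 * det4 z1 z2 z7 w * det4 z1 z2 z8 w
      + Cco z1 z2 z3 z4 z5 z6 z7 z8 * det4 z1 z2 z8 w ^ 2
    = det4 z1 z2 z7 z8 * det4 (shuf32 z1 z2 w z3 z4) z6 z5 (shuf23 z7 z8 z1 z2 w) := by
  set v := det4 z1 z2 z7 w • z8 - det4 z1 z2 z8 w • z7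
  have hv : ∀ u, det4 z1 z2 v u = det4 z1 z2 z7 z8 * det4 z1 z2 w u :=
    det4_third_smul_sub_smul_eq z1 z2 z7 z8 w
  calc _ = chain323 z1 z2 v z4 z3 z5 z6 v := by
        rw [chain323_smul_sub_smul, Aco, Bco, Cco]; ring
    _ = det4 z1 z2 z7 z8 * det4 (shuf32 z1 z2 w z3 z4) z6 z5 v := by
        rw [chain323, hv, hv, det4_swap_middle _ z5 z6, shuf32, det4_smul_sub_smul_left]; ring
    _ = _ := by rw [shuf23_eq]

end
end

section
/- For all vectors z_1,…,z_9 ∈ ℂ^4 the following polynomial identity (a three-term cluster exchange relation) holds: ⟨1567⟩·⟨12*456*789⟩ = ⟨1456⟩·⟨12*567*789⟩ + ⟨1256⟩·⟨1789⟩·⟨4567⟩, where ⟨12*456*789⟩ denotes the chain polynomial with blocks (z_1,z_2), (z_4,z_5,z_6), (z_7,z_8,z_9), and ⟨12*567*789⟩ denotes the chain polynomial with blocks (z_1,z_2), (z_5,z_6,z_7), (z_7,z_8,z_9). -/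
noncomputable section

/-- The chain polynomial `⟨X * Y * U⟩` for blocks `X = (x₁,x₂)`, `Y = (y₁,y₂,y₃)`,
`U = (u₁,u₂,u₃)` of sizes `(2,3,3)`:
`Σ_{w ∈ S₃¹} sign(w)·det[x₁ x₂ y_{w(2)} y_{w(3)}]·det[y_{w(1)} u₁ u₂ u₃]`. -/
def chain233 (x1 x2 y1 y2 y3 u1 u2 u3 : Fin 4 → ℂ) : ℂ :=
  det4 x1 x2 y2 y3 * det4 y1 u1 u2 u3
    - det4 x1 x2 y1 y3 * det4 y2 u1 u2 u3
    + det4 x1 x2 y1 y2 * det4 y3 u1 u2 u3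

/-!
Each term of the exchange relation is a product of brackets, and the identity is a combination of
three instances of the five-term Grassmann–Plücker relation
`Σᵢ (-1)ⁱ ⟨xᵢ y₁ y₂ y₃⟩ ⟨x₁ ⋯ x̂ᵢ ⋯ x₅⟩ = 0`: with `x = 12456, y = 789`, with `x = 12567, y = 789`
and with `x = 12456, y = 567`, where the brackets `⟨5567⟩` and `⟨6567⟩` vanish.
-/

lemma det4_expand (a b c d : Fin 4 → ℂ) :
    det4 a b c d =
      a 0 * b 1 * c 2 * d 3
      - a 0 * b 1 * d 2 * c 3
      - a 0 * c 1 * b 2 * d 3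
      + a 0 * c 1 * d 2 * b 3
      + a 0 * d 1 * b 2 * c 3
      - a 0 * d 1 * c 2 * b 3
      - b 0 * a 1 * c 2 * d 3
      + b 0 * a 1 * d 2 * c 3
      + b 0 * c 1 * a 2 * d 3
      - b 0 * c 1 * d 2 * a 3
      - b 0 * d 1 * a 2 * c 3
      + b 0 * d 1 * c 2 * a 3
      + c 0 * a 1 * b 2 * d 3
      - c 0 * a 1 * d 2 * b 3
      - c 0 * b 1 * a 2 * d 3
      + c 0 * b 1 * d 2 * a 3
      + c 0 * d 1 * a 2 * b 3
      - c 0 * d 1 * b 2 * a 3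
      - d 0 * a 1 * b 2 * c 3
      + d 0 * a 1 * c 2 * b 3
      + d 0 * b 1 * a 2 * c 3
      - d 0 * b 1 * c 2 * a 3
      - d 0 * c 1 * a 2 * b 3
      + d 0 * c 1 * b 2 * a 3 := by
  simp [det4, Matrix.det_succ_row_zero, Fin.sum_univ_succ, Fin.succAbove]
  ring

lemma det4_same_first_second (a b c : Fin 4 → ℂ) : det4 a a b c = 0 :=
  Matrix.det_zero_of_column_eq (i := 0) (j := 1) (by decide) fun _ => rfl

lemma det4_same_first_third (a b c : Fin 4 → ℂ) : det4 a b a c = 0 :=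
  Matrix.det_zero_of_column_eq (i := 0) (j := 2) (by decide) fun _ => rfl

lemma det4_grassmann_pluecker (x1 x2 x3 x4 x5 y1 y2 y3 : Fin 4 → ℂ) :
    det4 x1 y1 y2 y3 * det4 x2 x3 x4 x5 - det4 x2 y1 y2 y3 * det4 x1 x3 x4 x5
      + det4 x3 y1 y2 y3 * det4 x1 x2 x4 x5 - det4 x4 y1 y2 y3 * det4 x1 x2 x3 x5
      + det4 x5 y1 y2 y3 * det4 x1 x2 x3 x4 = 0 := by
  simp only [det4_expand]
  ring

theorem exchange_relation_1567_general (z1 z2 z4 z5 z6 z7 z8 z9 : Fin 4 → ℂ) :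
    det4 z1 z5 z6 z7 * chain233 z1 z2 z4 z5 z6 z7 z8 z9
    = det4 z1 z4 z5 z6 * chain233 z1 z2 z5 z6 z7 z7 z8 z9
      + det4 z1 z2 z5 z6 * det4 z1 z7 z8 z9 * det4 z4 z5 z6 z7 := by
  simp only [chain233]
  linear_combination det4 z1 z5 z6 z7 * det4_grassmann_pluecker z1 z2 z4 z5 z6 z7 z8 z9
    - det4 z1 z4 z5 z6 * det4_grassmann_pluecker z1 z2 z5 z6 z7 z7 z8 z9
    - det4 z1 z7 z8 z9 * det4_grassmann_pluecker z1 z2 z4 z5 z6 z5 z6 z7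
    - det4 z1 z2 z4 z6 * det4 z1 z7 z8 z9 * det4_same_first_second z5 z6 z7
    + det4 z1 z2 z4 z5 * det4 z1 z7 z8 z9 * det4_same_first_third z6 z5 z7

/-- For all vectors `z₁, …, z₉ ∈ ℂ⁴`, the three-term cluster exchange
relation
`⟨1567⟩·⟨12 * 456 * 789⟩ = ⟨1456⟩·⟨12 * 567 * 789⟩ + ⟨1256⟩·⟨1789⟩·⟨4567⟩`
holds, where `⟨12 * 456 * 789⟩` (resp. `⟨12 * 567 * 789⟩`) is the chain polynomial with
blocks `(z₁,z₂)`, `(z₄,z₅,z₆)`, `(z₇,z₈,z₉)` (resp. `(z₁,z₂)`, `(z₅,z₆,z₇)`,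
`(z₇,z₈,z₉)`). -/
theorem exchange_relation_1567 (z1 z2 z3 z4 z5 z6 z7 z8 z9 : Fin 4 → ℂ) :
    det4 z1 z5 z6 z7 * chain233 z1 z2 z4 z5 z6 z7 z8 z9
    = det4 z1 z4 z5 z6 * chain233 z1 z2 z5 z6 z7 z7 z8 z9
      + det4 z1 z2 z5 z6 * det4 z1 z7 z8 z9 * det4 z4 z5 z6 z7 :=
  exchange_relation_1567_general z1 z2 z4 z5 z6 z7 z8 z9

end
end
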